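/- Assume the sharpness condition. If x̄ ∈ ℝ^n and x⁺ is a global minimizer over ℝ^n of x ↦ f(x) + (M/(p+1))‖x − x̄‖^{p+1}, then σ₀ (p+1) dist(0, X^*) dist(x⁺, X^*) ≤ M dist(x̄, X^*)^{p+1}. -/
import Mathlib


open scoped BigOperators RealInnerProductSpace

noncomputable section

/-- The phase-retrieval objective `f(x) = ‖(⟨a_1,x⟩² − z_1, …, ⟨a_m,x⟩² − z_m)‖`
(Euclidean norm), i.e. `f(x) = ‖xᵀQx − z‖` with `Q_i = a_i a_iᵀ`. -/
def fPR {n m : ℕ} (a : Fin m → EuclideanSpace ℝ (Fin n)) (z : Fin m → ℝ)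
    (x : EuclideanSpace ℝ (Fin n)) : ℝ :=
  ‖(EuclideanSpace.equiv (Fin m) ℝ).symm fun i => ⟪a i, x⟫ ^ 2 - z i‖

/-- one step of the higher-order proximal point method under the
sharpness condition: `σ₀(p+1) dist(0,X*) dist(x⁺,X*) ≤ M dist(x̄,X*)^{p+1}`. -/
theorem stmt18 {n m : ℕ} (hn : 1 ≤ n) (hm : 1 ≤ m)
    (a : Fin m → EuclideanSpace ℝ (Fin n)) (z : Fin m → ℝ)
    (M : ℝ) (hM : 0 < M) (p : ℕ) (hp : 1 ≤ p)
    (Xs : Set (EuclideanSpace ℝ (Fin n)))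
    (hXs : Xs = {w | fPR a z w = ⨅ v, fPR a z v}) (hXne : Xs.Nonempty)
    (σ₀ : ℝ) (hσ₀ : 0 < σ₀)
    (hsharp : ∀ w : EuclideanSpace ℝ (Fin n),
      σ₀ * Metric.infDist 0 Xs * Metric.infDist w Xs ≤ fPR a z w - ⨅ v, fPR a z v)
    (xb xp : EuclideanSpace ℝ (Fin n))
    (hxp : ∀ w : EuclideanSpace ℝ (Fin n),
      fPR a z xp + M / ((p : ℝ) + 1) * ‖xp - xb‖ ^ (p + 1) ≤
        fPR a z w + M / ((p : ℝ) + 1) * ‖w - xb‖ ^ (p + 1)) :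
    σ₀ * ((p : ℝ) + 1) * Metric.infDist 0 Xs * Metric.infDist xp Xs ≤
      M * Metric.infDist xb Xs ^ (p + 1) := by
  have hcont : Continuous (fPR a z) := by
    unfold fPR
    apply Continuous.norm
    apply (EuclideanSpace.equiv (Fin m) ℝ).symm.continuous.comp
    apply continuous_pi
    intro i
    exact (((continuous_const.inner continuous_id)).pow 2).sub continuous_const
  have hclosed : IsClosed Xs := by
    rw [hXs]
    exact isClosed_eq hcont continuous_const
  obtain ⟨w, hwXs, hwd⟩ := hclosed.exists_infDist_eq_dist hXne xb
  have hwmin : fPR a z w = ⨅ v, fPR a z v := by rw [hXs] at hwXs; exact hwXs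
  have hp1 : (0:ℝ) < (p:ℝ) + 1 := by positivity
  have h1 := hxp w
  have h2 := hsharp xp
  have hnn : 0 ≤ M / ((p : ℝ) + 1) * ‖xp - xb‖ ^ (p + 1) := by positivity
  have key : σ₀ * Metric.infDist 0 Xs * Metric.infDist xp Xs ≤
      M / ((p : ℝ) + 1) * ‖w - xb‖ ^ (p + 1) := by
    have : fPR a z xp - ⨅ v, fPR a z v ≤ M / ((p : ℝ) + 1) * ‖w - xb‖ ^ (p + 1) := by
      rw [← hwmin]; linarith
    linarith
  have hwx : ‖w - xb‖ = Metric.infDist xb Xs := by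
    rw [hwd, dist_comm, dist_eq_norm]
  rw [hwx] at key
  calc σ₀ * ((p : ℝ) + 1) * Metric.infDist 0 Xs * Metric.infDist xp Xs
      = ((p : ℝ) + 1) * (σ₀ * Metric.infDist 0 Xs * Metric.infDist xp Xs) := by ring
    _ ≤ ((p : ℝ) + 1) * (M / ((p : ℝ) + 1) * Metric.infDist xb Xs ^ (p + 1)) :=
        mul_le_mul_of_nonneg_left key hp1.le
    _ = M * Metric.infDist xb Xs ^ (p + 1) := by field_simp

end
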